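/- arXiv:1505.04298 — 2 statements merged into one kernel-verified Lean document; each statement's English description precedes it below -/
import Mathlib

section
/- Let V be a vector space over a field, let ⟨·,·⟩ : V × V → k be a non-degenerate symmetric bilinear form, and let P : V → V be a linear map that is self-adjoint with respect to ⟨·,·⟩ (i.e. ⟨Pα,β⟩ = ⟨α,Pβ⟩ for all α,β). Suppose E⁺, E⁻ : V → V are linear maps satisfying P ∘ E⁺ = id and P ∘ E⁻ = id. Then E⁺ ∘ P = id and E⁻ ∘ P = id. -/
theorem stmt0 {k V : Type*} [Field k] [AddCommGroup V] [Module k V]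
    (B : V →ₗ[k] V →ₗ[k] k)
    (hsymm : ∀ x y : V, B x y = B y x)
    (hnondeg : ∀ y : V, (∀ x : V, B x y = 0) → y = 0)
    (P Ep Em : V →ₗ[k] V)
    (hself : ∀ x y : V, B (P x) y = B x (P y))
    (hEp : ∀ v : V, P (Ep v) = v)
    (hEm : ∀ v : V, P (Em v) = v) :
    (∀ v : V, Ep (P v) = v) ∧ (∀ v : V, Em (P v) = v) := by
  have key : ∀ (E E' : V →ₗ[k] V), (∀ v, P (E v) = v) → (∀ v, P (E' v) = v) →
      ∀ v : V, E (P v) = v := by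
    intro E E' hE hE' v
    have h : ∀ x : V, B x (E (P v) - v) = 0 := by
      intro x
      have : B x (E (P v)) = B x v := by
        calc B x (E (P v)) = B (P (E' x)) (E (P v)) := by rw [hE']
          _ = B (E' x) (P (E (P v))) := hself _ _
          _ = B (E' x) (P v) := by rw [hE]
          _ = B (P (E' x)) v := (hself _ _).symm
          _ = B x v := by rw [hE']
      simp [this]
    have := hnondeg _ h
    have := sub_eq_zero.mp this
    exact this
  exact ⟨key Ep Em hEp hEm, key Em Ep hEm hEp⟩
end

section
/- Let V be a vector space over ℝ with a non-degenerate bilinear form (·,·), let L : V → V be linear and self-adjoint, and let E : V → V be linear with (Ef, g) = −(f, Eg) for all f, g, and ker E = range L. If the bilinear form (·,·) is antisymmetric on V, then σ([f],[g]) := (f, Eg) is a well-defined, non-degenerate, symmetric bilinear form on V / range(L). -/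
theorem stmt4 {V : Type*} [AddCommGroup V] [Module ℝ V]
    (B : V →ₗ[ℝ] V →ₗ[ℝ] ℝ)
    (hnd1 : ∀ x : V, (∀ y : V, B x y = 0) → x = 0)
    (hnd2 : ∀ y : V, (∀ x : V, B x y = 0) → y = 0)
    (hantisymm : ∀ x y : V, B x y = - B y x)
    (L E : V →ₗ[ℝ] V)
    (hself : ∀ f g : V, B (L f) g = B f (L g))
    (hanti : ∀ f g : V, B (E f) g = - B f (E g))
    (hker : LinearMap.ker E = LinearMap.range L) :
    ∃ σ : (V ⧸ LinearMap.range L) →ₗ[ℝ] (V ⧸ LinearMap.range L) →ₗ[ℝ] ℝ,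
      (∀ f g : V, σ (Submodule.Quotient.mk f) (Submodule.Quotient.mk g) = B f (E g)) ∧
      (∀ x, (∀ y, σ x y = 0) → x = 0) ∧
      (∀ y, (∀ x, σ x y = 0) → y = 0) ∧
      (∀ x y, σ x y = σ y x) := by
  set R := LinearMap.range L with hR
  have hE0 : ∀ w : V, E (L w) = 0 := by
    intro w
    have : L w ∈ LinearMap.ker E := by
      rw [hker]; exact ⟨w, rfl⟩
    simpa using this
  have hle : ∀ f : V, R ≤ LinearMap.ker ((B f).comp E) := by
    rintro f v ⟨w, rfl⟩
    simp [hE0 w]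
  let T : V →ₗ[ℝ] (V ⧸ R) →ₗ[ℝ] ℝ :=
    { toFun := fun f => Submodule.liftQ R ((B f).comp E) (hle f)
      map_add' := by
        intro f g
        apply Submodule.linearMap_qext
        ext v
        simp
      map_smul' := by
        intro c f
        apply Submodule.linearMap_qext
        ext v
        simp }
  have hT : ∀ f g : V, T f (Submodule.Quotient.mk g) = B f (E g) := fun f g => rfl
  have hle2 : R ≤ LinearMap.ker T := by
    rintro v ⟨w, rfl⟩
    apply Submodule.linearMap_qext
    ext g
    have := hanti (L w) g
    simp only [hE0 w, map_zero, LinearMap.zero_apply, neg_eq_zero] at this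
    simpa [hT] using this.symm
  have hσ : ∀ f g : V, Submodule.liftQ R T hle2 (Submodule.Quotient.mk f) (Submodule.Quotient.mk g) = B f (E g) := fun f g => rfl
  refine ⟨Submodule.liftQ R T hle2, hσ, ?_, ?_, ?_⟩
  · intro x hx
    obtain ⟨f, rfl⟩ := Submodule.Quotient.mk_surjective R x
    have hEf : E f = 0 := by
      apply hnd1
      intro g
      have h1 : B f (E g) = 0 := by rw [← hσ]; exact hx (Submodule.Quotient.mk g)
      have := hanti f g
      rw [h1] at this
      simpa using this
    have : f ∈ R := by rw [← hker]; simpa using hEf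
    simpa [Submodule.Quotient.mk_eq_zero] using this
  · intro y hy
    obtain ⟨g, rfl⟩ := Submodule.Quotient.mk_surjective R y
    have hEg : E g = 0 := by
      apply hnd2
      intro f
      rw [← hσ]; exact hy (Submodule.Quotient.mk f)
    have : g ∈ R := by rw [← hker]; simpa using hEg
    simpa [Submodule.Quotient.mk_eq_zero] using this
  · intro x y
    obtain ⟨f, rfl⟩ := Submodule.Quotient.mk_surjective R x
    obtain ⟨g, rfl⟩ := Submodule.Quotient.mk_surjective R y
    rw [hσ, hσ]
    have h1 : B f (E g) = - B (E g) f := hantisymm f (E g)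
    have h2 : B (E g) f = - B g (E f) := hanti g f
    rw [h1, h2, neg_neg]
end
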